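/- Let Z be an accessible FSM with start state s, let X_1, …, X_n be pairwise disjoint thin modules of Z, let W = Z/X_1, …, X_n be the contraction with quotient map ρ, and let q be a node of Z with q ≠ s such that K_q is not contained in any X_i. Then W is accessible, ρ(q) is not the start state of W, and ρ(K_q) = K_{ρ(q)}, where K_{ρ(q)} is computed in W. -/

import Mathlib

/-!
A set `N` of states of the contraction `W` is a thin module exactly when `ρ⁻¹(N)` is one of `Z`:
membership in `ρ⁻¹(N)` depends only on classes, and the `x`-paths needed to compare totality and
`x`-cycles exist because a thin module with an `x`-exit is left by every `x`-path inside it.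
Pulling back the thin modules that define `K_{ρ(q)}` gives `ρ(K_q) ⊆ K_{ρ(q)}`. Conversely, a thin
module `M` defining `K_q` saturates to `ρ⁻¹(ρ(M))`, a union of thin modules each meeting `M` and
hence thin, and `ρ(M)` defines `K_{ρ(q)}` because `K_q ⊄ Xᵢ` forces `q` to be the entrance of its
class. So each class in `K_{ρ(q)}` meets every thin module defining `K_q`, hence meets `K_q`: a
module meeting all members of a family of modules through a common node meets their
intersection, since otherwise the distances from `s` of suitable start nodes would decrease
along a cycle.
-/

open Classical

universe u v

variable {Q : Type u} {E : Type v}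

/-- `u` is an entrance of `M`: `u ∈ M` receives an arc from outside `M`. -/
def IsEntrance (δ : Q → E → Option Q) (M : Set Q) (u : Q) : Prop :=
  u ∈ M ∧ ∃ x : E, ∃ v : Q, v ∉ M ∧ δ v x = some u

/-- `v` is an `x`-exit of `M`. -/
def IsExit (δ : Q → E → Option Q) (M : Set Q) (x : E) (v : Q) : Prop :=
  v ∉ M ∧ ∃ u ∈ M, δ u x = some v

/-- `M` is a module of the FSM `(Q, E, δ, s)`. -/
def IsFsmModule (δ : Q → E → Option Q) (s : Q) (M : Set Q) : Prop :=
  M.Nonempty ∧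
  (∀ u v : Q, IsEntrance δ M u → IsEntrance δ M v → u = v) ∧
  (s ∈ M → ∀ u : Q, IsEntrance δ M u → u = s) ∧
  ∀ x : E, (∃ v, IsExit δ M x v) →
    ((∀ v w : Q, IsExit δ M x v → IsExit δ M x w → v = w) ∧ ∀ u ∈ M, (δ u x).isSome)

/-- `M` contains an `x`-cycle. -/
def HasXCycleIn (δ : Q → E → Option Q) (x : E) (M : Set Q) : Prop :=
  ∃ q ∈ M, Relation.TransGen (fun a b => a ∈ M ∧ δ a x = some b) q q

/-- `M` is a thin module. -/
def IsThinModule (δ : Q → E → Option Q) (s : Q) (M : Set Q) : Prop :=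
  IsFsmModule δ s M ∧ ∀ x : E, (¬ ∃ v, IsExit δ M x v) ∨ ¬ HasXCycleIn δ x M

/-- One transition step of the FSM, as a digraph arc. -/
def FsmStep (δ : Q → E → Option Q) (u v : Q) : Prop := ∃ x : E, δ u x = some v

/-- Reachability by a directed path. -/
def Reaches (δ : Q → E → Option Q) : Q → Q → Prop := Relation.ReflTransGen (FsmStep δ)

/-- Every state is reachable from the start state. -/
def Accessible (δ : Q → E → Option Q) (s : Q) : Prop := ∀ q : Q, Reaches δ s q

/-- `σ` is the start node of the module `M`. -/
def IsStartNode (δ : Q → E → Option Q) (s : Q) (M : Set Q) (σ : Q) : Prop :=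
  (s ∈ M ∧ σ = s) ∨ (s ∉ M ∧ IsEntrance δ M σ)

/-- Two sets overlap. -/
def Overlap {α : Type*} (X Y : Set α) : Prop :=
  (X ∩ Y).Nonempty ∧ ¬ X ⊆ Y ∧ ¬ Y ⊆ X

/-- A collection of sets is overlapping: across every partition into two
nonempty blocks there is an overlapping pair. -/
def OverlapColl {α : Type*} (S : Set (Set α)) : Prop :=
  ∀ T ⊆ S, T.Nonempty → (S \ T).Nonempty → ∃ a ∈ T, ∃ b ∈ S \ T, Overlap a b

/-- `M` is decomposable with respect to the family `F`. -/
def Decomposable {α : Type*} (F : Set (Set α)) (M : Set α) : Prop :=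
  ∃ S : Set (Set α), S ⊆ F ∧ OverlapColl S ∧ ⋃₀ S = M ∧ ∃ a ∈ S, ∃ b ∈ S, a ≠ b

/-- `M` is an indecomposable member of the family `F`. -/
def Indecomposable {α : Type*} (F : Set (Set α)) (M : Set α) : Prop :=
  M ∈ F ∧ ¬ Decomposable F M

/-- `M` is an indecomposable thin module of the FSM. -/
def IndecompThin (δ : Q → E → Option Q) (s : Q) (M : Set Q) : Prop :=
  Indecomposable {N : Set Q | IsThinModule δ s N} M

/-- `K_q`: the intersection of all thin modules containing `q` of which `q` is not
the start node. -/
def Kset (δ : Q → E → Option Q) (s : Q) (q : Q) : Set Q :=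
  ⋂₀ {M : Set Q | IsThinModule δ s M ∧ q ∈ M ∧ ¬ IsStartNode δ s M q}

/-- The quotient map `ρ` of the contraction `Z/X₁,…,Xₙ`: it sends each state to its
class, namely `X i` if `q ∈ X i`, and the singleton `{q}` otherwise. -/
noncomputable def rho {n : ℕ} (X : Fin n → Set Q) (q : Q) : Set Q :=
  if h : ∃ i, q ∈ X i then X (Classical.choose h) else {q}

/-- The states of the contraction `Z/X₁,…,Xₙ`: the classes of the quotient map. -/
def CState {Q : Type u} {n : ℕ} (X : Fin n → Set Q) : Type u :=
  {A : Set Q // ∃ q : Q, rho X q = A}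

/-- The transition relation of the contraction `Z/X₁,…,Xₙ`:
`δ'(ρ(u), x) = ρ(v)` iff `δ(u', x) = v'` for some `u'`, `v'` in the classes of `u`
and `v`, where the two classes are distinct or the class is a singleton `{u}` (not
a collapsed module) with a self-loop `δ(u, x) = u`. -/
def CRel {n : ℕ} (δ : Q → E → Option Q) (X : Fin n → Set Q)
    (A : Set Q) (x : E) (B : Set Q) : Prop :=
  (∃ u v : Q, rho X u = A ∧ rho X v = B ∧ δ u x = some v) ∧
  (A ≠ B ∨ ∃ u : Q, A = {u} ∧ (∀ i, u ∉ X i) ∧ δ u x = some u)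

/-- The transition function of the contraction `Z/X₁,…,Xₙ`, realising the relation
`CRel` (which is single-valued since the `Xᵢ` are modules). -/
noncomputable def Cδ {n : ℕ} (δ : Q → E → Option Q) (X : Fin n → Set Q) :
    CState X → E → Option (CState X) :=
  fun A x =>
    if h : ∃ B : CState X, CRel δ X A.1 x B.1 then some (Classical.choose h)
    else none

section Relations

variable {α : Type*} {r : α → α → Prop}

lemma exists_arc_into_of_reflTransGen {S : Set α} {a b : α} (h : Relation.ReflTransGen r a b)
    (ha : a ∉ S) (hb : b ∈ S) : ∃ u v, r u v ∧ u ∉ S ∧ v ∈ S := by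
  induction h with
  | refl => exact absurd hb ha
  | @tail c d _ hcd ih =>
    by_cases hc : c ∈ S
    · exact ih hc
    · exact ⟨c, d, hcd, hc, hb⟩

lemma exists_transGen_self_of_forall_exists [Finite α] {S : Set α} (hS : S.Nonempty)
    (h : ∀ a ∈ S, ∃ b ∈ S, Relation.TransGen r a b) : ∃ a ∈ S, Relation.TransGen r a a := by
  by_contra! hacyc
  -- On a finite type, an acyclic transitive relation is well founded.
  let R : α → α → Prop := fun b a => a ∈ S ∧ Relation.TransGen r a b
  have : IsTrans α R := ⟨fun _ _ _ hcb hba => ⟨hba.1, hba.2.trans hcb.2⟩⟩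
  have : Std.Irrefl R := ⟨fun a haa => hacyc a haa.1 haa.2⟩
  obtain ⟨a, haS, hmin⟩ := (Finite.wellFounded_of_trans_of_irrefl R).has_min S hS
  obtain ⟨b, hbS, hab⟩ := h a haS
  exact hmin b hbS ⟨haS, hab⟩

lemma transGen_restrict_of_forward_closed {p : α → Prop} (hp : ∀ a b, r a b → p a → p b)
    {a b : α} (h : Relation.TransGen r a b) (ha : p a) :
    Relation.TransGen (fun u v => p u ∧ r u v) a b := by
  induction h using Relation.TransGen.head_induction_on with
  | single hab => exact .single ⟨ha, hab⟩
  | head hac _ ih => exact .head ⟨ha, hac⟩ (ih (hp _ _ hac ha))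

lemma transGen_restrict_of_backward_closed {p : α → Prop} (hp : ∀ a b, r a b → p b → p a)
    {a b : α} (h : Relation.TransGen r a b) (hb : p b) :
    Relation.TransGen (fun u v => p u ∧ r u v) a b := by
  induction h with
  | single hab => exact .single ⟨hp _ _ hab hb, hab⟩
  | tail _ hcb ih => exact .tail (ih (hp _ _ hcb hb)) ⟨hp _ _ hcb hb, hcb⟩

lemma transGen_mem_and_mem {S : Set α} {a b : α}
    (h : Relation.TransGen (fun u v => u ∈ S ∧ r u v) a b) (hb : b ∈ S) :
    Relation.TransGen (fun u v => u ∈ S ∧ v ∈ S ∧ r u v) a b := by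
  induction h with
  | single hab => exact .single ⟨hab.1, hb, hab.2⟩
  | tail _ hcb ih => exact .tail (ih hcb.1) ⟨hcb.1, hb, hcb.2⟩

end Relations

section Modules

variable {δ : Q → E → Option Q} {s : Q}

lemma IsStartNode.mem {M : Set Q} {σ : Q} (h : IsStartNode δ s M σ) : σ ∈ M := by
  rcases h with ⟨hs, rfl⟩ | ⟨_, hσ⟩
  exacts [hs, hσ.1]

lemma IsStartNode.eq_start {M : Set Q} {σ : Q} (h : IsStartNode δ s M σ) (hs : s ∈ M) :
    σ = s := by
  rcases h with ⟨_, rfl⟩ | ⟨hs', _⟩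
  exacts [rfl, absurd hs hs']

lemma IsFsmModule.eq_of_isEntrance {M : Set Q} (hM : IsFsmModule δ s M) {σ v : Q}
    (hσ : IsStartNode δ s M σ) (hv : IsEntrance δ M v) : v = σ := by
  rcases hσ with ⟨hs, rfl⟩ | ⟨_, hσ⟩
  exacts [hM.2.2.1 hs v hv, hM.2.1 v σ hv hσ]

lemma IsEntrance.of_subset {M P : Set Q} {u : Q} (hu : IsEntrance δ P u) (hMP : M ⊆ P)
    (huM : u ∈ M) : IsEntrance δ M u := by
  obtain ⟨-, x, v, hv, harc⟩ := hu
  exact ⟨huM, x, v, fun h => hv (hMP h), harc⟩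

lemma exists_isStartNode (hacc : Accessible δ s) {M : Set Q} (hM : M.Nonempty) :
    ∃ σ, IsStartNode δ s M σ := by
  by_cases hs : s ∈ M
  · exact ⟨s, .inl ⟨hs, rfl⟩⟩
  · obtain ⟨m, hm⟩ := hM
    obtain ⟨u, v, ⟨x, harc⟩, hu, hv⟩ := exists_arc_into_of_reflTransGen (hacc m) hs hm
    exact ⟨v, .inr ⟨hs, hv, x, u, hu, harc⟩⟩

lemma IsFsmModule.start_mem_or_start_mem (hacc : Accessible δ s) {A M : Set Q}
    (hA : IsFsmModule δ s A) (hM : IsFsmModule δ s M) {σA σM : Q}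
    (hσA : IsStartNode δ s A σA) (hσM : IsStartNode δ s M σM) (hAM : (A ∩ M).Nonempty) :
    σA ∈ M ∨ σM ∈ A := by
  obtain ⟨z, hz⟩ := hAM
  by_cases hs : s ∈ A ∩ M
  · exact .inr (hσM.eq_start hs.2 ▸ hs.1)
  · obtain ⟨u, v, ⟨x, harc⟩, hu, hv⟩ := exists_arc_into_of_reflTransGen (hacc z) hs hz
    by_cases huA : u ∈ A
    · have hent : IsEntrance δ M v := ⟨hv.2, x, u, fun huM => hu ⟨huA, huM⟩, harc⟩
      exact .inr (hM.eq_of_isEntrance hσM hent ▸ hv.1)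
    · exact .inl (hA.eq_of_isEntrance hσA ⟨hv.1, x, u, huA, harc⟩ ▸ hv.2)

end Modules

section Distance

variable {δ : Q → E → Option Q} {s : Q}

def ReachesIn (δ : Q → E → Option Q) (s : Q) : ℕ → Q → Prop
  | 0, v => v = s
  | m + 1, v => ∃ u, ReachesIn δ s m u ∧ FsmStep δ u v

noncomputable def startDist (δ : Q → E → Option Q) (s v : Q) : ℕ :=
  sInf {m | ReachesIn δ s m v}

lemma exists_reachesIn_of_reaches {v : Q} (h : Reaches δ s v) : ∃ m, ReachesIn δ s m v := by
  induction h with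
  | refl => exact ⟨0, rfl⟩
  | tail _ hcd ih =>
    obtain ⟨m, hm⟩ := ih
    exact ⟨m + 1, _, hm, hcd⟩

lemma IsFsmModule.exists_reachesIn_start {M : Set Q} (hM : IsFsmModule δ s M) {σ : Q}
    (hσ : IsStartNode δ s M σ) :
    ∀ {m : ℕ} {w : Q}, ReachesIn δ s m w → w ∈ M →
      ∃ k ≤ m, ReachesIn δ s k σ ∧ (w ≠ σ → k < m)
  | 0, w, (hw : w = s), hwM => by
    subst hw
    exact ⟨0, le_rfl, hσ.eq_start hwM, fun hne => absurd (hσ.eq_start hwM).symm hne⟩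
  | m + 1, w, ⟨u, hu, x, harc⟩, hwM => by
    by_cases huM : u ∈ M
    · obtain ⟨k, hkm, hk, -⟩ := hM.exists_reachesIn_start hσ hu huM
      exact ⟨k, by omega, hk, fun _ => by omega⟩
    · have hwσ : w = σ := hM.eq_of_isEntrance hσ ⟨hwM, x, u, huM, harc⟩
      subst hwσ
      exact ⟨m + 1, le_rfl, ⟨u, hu, x, harc⟩, fun hne => absurd rfl hne⟩

lemma startDist_lt (hacc : Accessible δ s) {M : Set Q} (hM : IsFsmModule δ s M) {σ v : Q}
    (hσ : IsStartNode δ s M σ) (hv : v ∈ M) (hvσ : v ≠ σ) :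
    startDist δ s σ < startDist δ s v := by
  obtain ⟨k, -, hk, hlt⟩ :=
    hM.exists_reachesIn_start hσ (Nat.sInf_mem (exists_reachesIn_of_reaches (hacc v))) hv
  exact (Nat.sInf_le hk).trans_lt (hlt hvσ)

theorem IsFsmModule.inter_sInter_nonempty [Finite Q] (hacc : Accessible δ s)
    {F : Set (Set Q)} (hF : ∀ M ∈ F, IsFsmModule δ s M) {q : Q} (hqF : ∀ M ∈ F, q ∈ M)
    {A : Set Q} (hA : IsFsmModule δ s A) (hAF : ∀ M ∈ F, (A ∩ M).Nonempty) :
    (A ∩ ⋂₀ F).Nonempty := by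
  by_contra hempty
  have hmiss : ∀ a ∈ A, ∃ M ∈ F, a ∉ M := by
    intro a ha
    by_contra! h
    exact hempty ⟨a, ha, Set.mem_sInter.mpr h⟩
  obtain ⟨σA, hσA⟩ := exists_isStartNode hacc hA.1
  -- Take a start node `σ ∈ A` of some `N ∈ F` at maximal distance, and `N' ∈ F` missing it:
  -- the start nodes `σ'` of `N'` and `σA` of `A` then give `σ < σ' < σA < σ` in distance.
  let J := {σ | σ ∈ A ∧ ∃ N ∈ F, IsStartNode δ s N σ}
  have hJ : J.Nonempty := by
    obtain ⟨M, hM, hσAM⟩ := hmiss σA hσA.mem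
    obtain ⟨σ, hσ⟩ := exists_isStartNode hacc (hF M hM).1
    exact ⟨σ, (hA.start_mem_or_start_mem hacc (hF M hM) hσA hσ (hAF M hM)).resolve_left hσAM,
      M, hM, hσ⟩
  obtain ⟨σ, ⟨hσA', N, hN, hσ⟩, hmax⟩ := Set.exists_max_image J (startDist δ s) J.toFinite hJ
  obtain ⟨N', hN', hσN'⟩ := hmiss σ hσA'
  obtain ⟨σ', hσ'⟩ := exists_isStartNode hacc (hF N' hN').1
  have hσ'N : σ' ∈ N := ((hF N hN).start_mem_or_start_mem hacc (hF N' hN') hσ hσ'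
    ⟨q, hqF N hN, hqF N' hN'⟩).resolve_left hσN'
  have h₁ : startDist δ s σ < startDist δ s σ' :=
    startDist_lt hacc (hF N hN) hσ hσ'N fun h => hσN' (h ▸ hσ'.mem)
  have hσ'A : σ' ∉ A := fun h => (hmax σ' ⟨h, N', hN', hσ'⟩).not_gt h₁
  have hσAN' : σA ∈ N' :=
    (hA.start_mem_or_start_mem hacc (hF N' hN') hσA hσ' (hAF N' hN')).resolve_right hσ'A
  have h₂ : startDist δ s σ' < startDist δ s σA :=
    startDist_lt hacc (hF N' hN') hσ' hσAN' fun h => hσ'A (h ▸ hσA.mem)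
  have h₃ : startDist δ s σA < startDist δ s σ :=
    startDist_lt hacc hA hσA hσA' fun h => hσN' (h ▸ hσAN')
  omega

end Distance

section ThinModules

variable {δ : Q → E → Option Q} {s : Q} {M N : Set Q} {x : E}

lemma IsFsmModule.isSome_of_isExit (hM : IsFsmModule δ s M) {v : Q} (hv : IsExit δ M x v)
    {u : Q} (hu : u ∈ M) : (δ u x).isSome :=
  (hM.2.2.2 x ⟨v, hv⟩).2 u hu

lemma IsFsmModule.eq_of_isExit (hM : IsFsmModule δ s M) {v w : Q} (hv : IsExit δ M x v)
    (hw : IsExit δ M x w) : v = w :=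
  (hM.2.2.2 x ⟨v, hv⟩).1 v w hv hw

lemma IsThinModule.not_hasXCycleIn (hM : IsThinModule δ s M) {v : Q} (hv : IsExit δ M x v) :
    ¬ HasXCycleIn δ x M :=
  (hM.2 x).resolve_left fun h => h ⟨v, hv⟩

lemma exists_isExit_transGen [Finite Q] (htot : ∀ u ∈ M, (δ u x).isSome)
    (hnc : ¬ HasXCycleIn δ x M) {w : Q} (hw : w ∈ M) :
    ∃ v, IsExit δ M x v ∧ Relation.TransGen (fun a b => a ∈ M ∧ δ a x = some b) w v := by
  by_contra! hno
  let S := {t | t ∈ M ∧ Relation.ReflTransGen (fun a b => a ∈ M ∧ δ a x = some b) w t}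
  have hsucc : ∀ t ∈ S, ∃ v ∈ S, Relation.TransGen (fun a b => a ∈ M ∧ δ a x = some b) t v := by
    rintro t ⟨htM, hwt⟩
    obtain ⟨v, hv⟩ := Option.isSome_iff_exists.mp (htot t htM)
    have hvM : v ∈ M := by
      by_contra hvM
      exact hno v ⟨hvM, t, htM, hv⟩ (.tail' hwt ⟨htM, hv⟩)
    exact ⟨v, show v ∈ M ∧ _ from ⟨hvM, hwt.tail ⟨htM, hv⟩⟩, .single ⟨htM, hv⟩⟩
  obtain ⟨t, ⟨htM, -⟩, hcyc⟩ := exists_transGen_self_of_forall_exists (S := S) ⟨w, hw, .refl⟩ hsucc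
  exact hnc ⟨t, htM, hcyc⟩

lemma forall_isEntrance_union_eq_start (hM : IsFsmModule δ s M) (hN : IsFsmModule δ s N)
    {σM σN : Q} (hσM : IsStartNode δ s M σM) (hσN : IsStartNode δ s N σN) (hσNM : σN ∈ M) :
    (s ∈ M ∪ N → σM = s) ∧ ∀ u, IsEntrance δ (M ∪ N) u → u = σM := by
  refine ⟨fun hs => hσM.eq_start (hs.elim id fun hsN => hσN.eq_start hsN ▸ hσNM), fun u hu => ?_⟩
  by_cases huM : u ∈ M
  · exact hM.eq_of_isEntrance hσM (hu.of_subset Set.subset_union_left huM)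
  · have huN : u ∈ N := hu.1.resolve_left huM
    exact absurd (hN.eq_of_isEntrance hσN (hu.of_subset Set.subset_union_right huN) ▸ hσNM) huM

lemma exists_forall_isEntrance_union_eq (hacc : Accessible δ s) (hM : IsFsmModule δ s M)
    (hN : IsFsmModule δ s N) (hMN : (M ∩ N).Nonempty) :
    ∃ σ, (s ∈ M ∪ N → σ = s) ∧ ∀ u, IsEntrance δ (M ∪ N) u → u = σ := by
  obtain ⟨σM, hσM⟩ := exists_isStartNode hacc hM.1
  obtain ⟨σN, hσN⟩ := exists_isStartNode hacc hN.1
  rcases hM.start_mem_or_start_mem hacc hN hσM hσN hMN with hσMN | hσNM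
  · rw [Set.union_comm]
    exact ⟨σN, forall_isEntrance_union_eq_start hN hM hσN hσM hσMN⟩
  · exact ⟨σM, forall_isEntrance_union_eq_start hM hN hσM hσN hσNM⟩

lemma hasXCycleIn_union (hclosed : ∀ a ∈ M, ∀ b ∈ M ∪ N, δ a x = some b → b ∈ M)
    (h : HasXCycleIn δ x (M ∪ N)) : HasXCycleIn δ x M ∨ HasXCycleIn δ x N := by
  obtain ⟨z, hz, hcyc⟩ := h
  have hcyc' := transGen_mem_and_mem hcyc hz
  have hstep : ∀ a b, (a ∈ M ∪ N ∧ b ∈ M ∪ N ∧ δ a x = some b) → a ∈ M → b ∈ M :=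
    fun a b hab haM => hclosed a haM b hab.2.1 hab.2.2
  by_cases hzM : z ∈ M
  · refine .inl ⟨z, hzM, ?_⟩
    exact Relation.TransGen.mono (fun a b hab => ⟨hab.1, hab.2.2.2⟩) _ _
      (transGen_restrict_of_forward_closed hstep hcyc' hzM)
  · refine .inr ⟨z, hz.resolve_left hzM, ?_⟩
    exact Relation.TransGen.mono (fun a b hab => ⟨hab.2.1.resolve_left hab.1, hab.2.2.2⟩) _ _
      (transGen_restrict_of_backward_closed (p := (· ∉ M))
        (fun a b hab hb ha => hb (hstep a b hab ha)) hcyc' hzM)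

/-- The `x`-path from a node of `M ∩ N` to the exit `v₀` of `M` has to leave `N`. -/
lemma IsThinModule.exists_isExit_of_inter [Finite Q] (hM : IsThinModule δ s M)
    (hMN : (M ∩ N).Nonempty) {v₀ : Q} (hv₀ : IsExit δ M x v₀) (hv₀N : v₀ ∉ N) :
    ∃ b, IsExit δ N x b ∧ (b ∉ M → b = v₀) := by
  obtain ⟨w, hwM, hwN⟩ := hMN
  obtain ⟨v, hv, hwv⟩ := exists_isExit_transGen (fun u hu => hM.1.isSome_of_isExit hv₀ hu)
    (hM.not_hasXCycleIn hv₀) hwM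
  have hvv₀ : v = v₀ := hM.1.eq_of_isExit hv hv₀
  subst hvv₀
  obtain ⟨a, b, ⟨haM, hab⟩, haN, hbN⟩ :=
    exists_arc_into_of_reflTransGen (S := Nᶜ) hwv.to_reflTransGen (fun h => h hwN) hv₀N
  exact ⟨b, ⟨hbN, a, not_not.mp haN, hab⟩, fun hbM => hM.1.eq_of_isExit ⟨hbM, a, haM, hab⟩ hv⟩

lemma IsThinModule.union_of_isExit [Finite Q] (hM : IsThinModule δ s M)
    (hN : IsThinModule δ s N) (hMN : (M ∩ N).Nonempty) {v₀ : Q} (hv₀ : IsExit δ M x v₀)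
    (hv₀N : v₀ ∉ N) :
    (∀ v, IsExit δ (M ∪ N) x v → v = v₀) ∧ (∀ u ∈ M ∪ N, (δ u x).isSome) ∧
      ¬ HasXCycleIn δ x (M ∪ N) := by
  obtain ⟨b, hb, hbv₀⟩ := hM.exists_isExit_of_inter hMN hv₀ hv₀N
  refine ⟨?_, ?_, fun hcyc => ?_⟩
  · rintro v ⟨hv, u, hu | hu, harc⟩
    · exact hM.1.eq_of_isExit ⟨fun h => hv (.inl h), u, hu, harc⟩ hv₀
    · have hvb : v = b := hN.1.eq_of_isExit ⟨fun h => hv (.inr h), u, hu, harc⟩ hb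
      exact hvb.trans (hbv₀ fun hbM => hv (.inl (hvb ▸ hbM)))
  · rintro u (hu | hu)
    exacts [hM.1.isSome_of_isExit hv₀ hu, hN.1.isSome_of_isExit hb hu]
  · have hclosed : ∀ a ∈ M, ∀ c ∈ M ∪ N, δ a x = some c → c ∈ M := by
      intro a ha c hc harc
      by_contra hcM
      have hcv₀ : c = v₀ := hM.1.eq_of_isExit ⟨hcM, a, ha, harc⟩ hv₀
      exact hc.elim hcM (hcv₀ ▸ hv₀N)
    rcases hasXCycleIn_union hclosed hcyc with h | h
    exacts [hM.not_hasXCycleIn hv₀ h, hN.not_hasXCycleIn hb h]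

theorem IsThinModule.union [Finite Q] (hacc : Accessible δ s) (hM : IsThinModule δ s M)
    (hN : IsThinModule δ s N) (hMN : (M ∩ N).Nonempty) : IsThinModule δ s (M ∪ N) := by
  obtain ⟨σ, hσs, hσ⟩ := exists_forall_isEntrance_union_eq hacc hM.1 hN.1 hMN
  have hexit : ∀ x v₀, IsExit δ (M ∪ N) x v₀ →
      (∀ v, IsExit δ (M ∪ N) x v → v = v₀) ∧ (∀ u ∈ M ∪ N, (δ u x).isSome) ∧
        ¬ HasXCycleIn δ x (M ∪ N) := by
    rintro x v₀ ⟨hv₀, u, hu | hu, harc⟩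
    · exact hM.union_of_isExit hN hMN ⟨fun h => hv₀ (.inl h), u, hu, harc⟩ fun h => hv₀ (.inr h)
    · rw [Set.union_comm]
      exact hN.union_of_isExit hM (Set.inter_comm M N ▸ hMN) ⟨fun h => hv₀ (.inr h), u, hu, harc⟩
        fun h => hv₀ (.inl h)
  refine ⟨⟨hM.1.1.mono Set.subset_union_left, fun u v hu hv => (hσ u hu).trans (hσ v hv).symm,
    fun hs u hu => (hσ u hu).trans (hσs hs), fun x ⟨v₀, hv₀⟩ => ?_⟩, fun x => ?_⟩
  · obtain ⟨huniq, htot, -⟩ := hexit x v₀ hv₀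
    exact ⟨fun v w hv hw => (huniq v hv).trans (huniq w hw).symm, htot⟩
  · by_cases hx : ∃ v, IsExit δ (M ∪ N) x v
    · obtain ⟨v₀, hv₀⟩ := hx
      exact .inr (hexit x v₀ hv₀).2.2
    · exact .inl hx

theorem IsThinModule.union_biUnion [Finite Q] {ι : Type*} (hacc : Accessible δ s)
    (hM : IsThinModule δ s M) {Y : ι → Set Q} (t : Finset ι)
    (hY : ∀ i ∈ t, IsThinModule δ s (Y i) ∧ (Y i ∩ M).Nonempty) :
    IsThinModule δ s (M ∪ ⋃ i ∈ t, Y i) := by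
  classical
  induction t using Finset.induction_on with
  | empty => simpa using hM
  | @insert i t _ ih =>
    obtain ⟨hYi, a, haY, haM⟩ := hY i (Finset.mem_insert_self i t)
    rw [Finset.set_biUnion_insert, Set.union_left_comm]
    exact hYi.union hacc (ih fun j hj => hY j (Finset.mem_insert_of_mem hj)) ⟨a, haY, .inl haM⟩

lemma isThinModule_singleton (δ : Q → E → Option Q) (s p : Q) : IsThinModule δ s {p} := by
  refine ⟨⟨Set.singleton_nonempty p, fun v w hv hw => hv.1.trans hw.1.symm,
    fun hs v hv => hv.1.trans hs.symm, fun x hex => ⟨?_, ?_⟩⟩, fun x => ?_⟩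
  · rintro v w ⟨-, _, rfl, hv⟩ ⟨-, _, rfl, hw⟩
    exact Option.some.inj (hv.symm.trans hw)
  · intro u hu
    obtain ⟨v, -, w, hw, hwv⟩ := hex
    rw [Set.mem_singleton_iff.mp hu, ← Set.mem_singleton_iff.mp hw, hwv]
    rfl
  · refine or_iff_not_imp_left.mpr fun hex => ?_
    push Not at hex
    obtain ⟨v, hv, w, hw, hwv⟩ := hex
    rintro ⟨z, hz, hcyc⟩
    obtain ⟨c, -, hc, hcz⟩ := Relation.TransGen.tail'_iff.mp hcyc
    rw [Set.mem_singleton_iff] at hw hz hc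
    subst hw hz hc
    exact hv (Option.some.inj (hwv.symm.trans hcz))

end ThinModules

section Contraction

variable {δ : Q → E → Option Q} {s : Q} {n : ℕ} {X : Fin n → Set Q} {x : E}

def toCState (X : Fin n → Set Q) (u : Q) : CState X := ⟨rho X u, u, rfl⟩

lemma mem_rho_self (u : Q) : u ∈ rho X u := by
  unfold rho
  split_ifs with h
  exacts [Classical.choose_spec h, rfl]

lemma rho_eq_of_mem (hdisj : ∀ i j, i ≠ j → Disjoint (X i) (X j)) {u : Q} {i : Fin n}
    (hu : u ∈ X i) : rho X u = X i := by
  have h : ∃ j, u ∈ X j := ⟨i, hu⟩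
  rw [rho, dif_pos h]
  by_contra hne
  exact Set.disjoint_left.mp (hdisj _ i fun heq => hne (congrArg X heq))
    (Classical.choose_spec h) hu

lemma rho_eq_singleton {u : Q} (hu : ∀ i, u ∉ X i) : rho X u = {u} :=
  dif_neg fun ⟨i, hi⟩ => hu i hi

lemma rho_eq_rho_of_mem (hdisj : ∀ i j, i ≠ j → Disjoint (X i) (X j)) {u w : Q}
    (hw : w ∈ rho X u) : rho X w = rho X u := by
  by_cases hu : ∃ i, u ∈ X i
  · obtain ⟨i, hui⟩ := hu
    rw [rho_eq_of_mem hdisj hui] at hw ⊢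
    exact rho_eq_of_mem hdisj hw
  · push Not at hu
    rw [rho_eq_singleton hu] at hw ⊢
    rw [Set.mem_singleton_iff.mp hw, rho_eq_singleton hu]

lemma rho_isThinModule (hdisj : ∀ i j, i ≠ j → Disjoint (X i) (X j))
    (hthin : ∀ i, IsThinModule δ s (X i)) (u : Q) : IsThinModule δ s (rho X u) := by
  by_cases hu : ∃ i, u ∈ X i
  · obtain ⟨i, hui⟩ := hu
    exact rho_eq_of_mem hdisj hui ▸ hthin i
  · push Not at hu
    exact rho_eq_singleton hu ▸ isThinModule_singleton δ s u

lemma rho_isFsmModule (hdisj : ∀ i j, i ≠ j → Disjoint (X i) (X j))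
    (hmod : ∀ i, IsFsmModule δ s (X i)) (u : Q) : IsFsmModule δ s (rho X u) := by
  by_cases hu : ∃ i, u ∈ X i
  · obtain ⟨i, hui⟩ := hu
    exact rho_eq_of_mem hdisj hui ▸ hmod i
  · push Not at hu
    exact rho_eq_singleton hu ▸ (isThinModule_singleton δ s u).1

lemma CState.exists_eq_toCState (A : CState X) : ∃ p, A = toCState X p :=
  let ⟨p, hp⟩ := A.2
  ⟨p, Subtype.ext hp.symm⟩

lemma CState.eq_toCState (hdisj : ∀ i j, i ≠ j → Disjoint (X i) (X j)) {A : CState X} {u : Q}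
    (hu : u ∈ A.1) : A = toCState X u := by
  obtain ⟨p, rfl⟩ := A.exists_eq_toCState
  exact Subtype.ext (rho_eq_rho_of_mem hdisj hu).symm

lemma rho_subset_preimage_toCState (hdisj : ∀ i j, i ≠ j → Disjoint (X i) (X j))
    {N : Set (CState X)} {u : Q} (hu : u ∈ toCState X ⁻¹' N) : rho X u ⊆ toCState X ⁻¹' N :=
  fun w hw => by
    rw [Set.mem_preimage, ← CState.eq_toCState hdisj (A := toCState X u) hw]
    exact hu

lemma CRel.exists_isExit (hdisj : ∀ i j, i ≠ j → Disjoint (X i) (X j)) {i : Fin n} {B : Set Q}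
    (h : CRel δ X (X i) x B) : ∃ v, IsExit δ (X i) x v ∧ rho X v = B := by
  obtain ⟨⟨u, v, hu, hv, harc⟩, hne | ⟨w, hw, hwX, -⟩⟩ := h
  · refine ⟨v, ⟨fun hvX => hne ?_, u, hu ▸ mem_rho_self u, harc⟩, hv⟩
    rw [← hv, rho_eq_of_mem hdisj hvX]
  · exact absurd (hw ▸ Set.mem_singleton w) (hwX i)

lemma CRel.singleton {p : Q} {B : Set Q} (h : CRel δ X {p} x B) :
    ∃ v, δ p x = some v ∧ rho X v = B := by
  obtain ⟨⟨u, v, hu, hv, harc⟩, -⟩ := h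
  have hup : u ∈ ({p} : Set Q) := hu ▸ mem_rho_self u
  exact ⟨v, Set.mem_singleton_iff.mp hup ▸ harc, hv⟩

lemma CRel.unique (hdisj : ∀ i j, i ≠ j → Disjoint (X i) (X j))
    (hmod : ∀ i, IsFsmModule δ s (X i)) {p : Q} {B₁ B₂ : Set Q} (h₁ : CRel δ X (rho X p) x B₁)
    (h₂ : CRel δ X (rho X p) x B₂) : B₁ = B₂ := by
  by_cases hp : ∃ i, p ∈ X i
  · obtain ⟨i, hpi⟩ := hp
    rw [rho_eq_of_mem hdisj hpi] at h₁ h₂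
    obtain ⟨v₁, hv₁, rfl⟩ := h₁.exists_isExit hdisj
    obtain ⟨v₂, hv₂, rfl⟩ := h₂.exists_isExit hdisj
    rw [(hmod i).eq_of_isExit hv₁ hv₂]
  · push Not at hp
    rw [rho_eq_singleton hp] at h₁ h₂
    obtain ⟨v₁, hv₁, rfl⟩ := h₁.singleton
    obtain ⟨v₂, hv₂, rfl⟩ := h₂.singleton
    rw [Option.some.inj (hv₁.symm.trans hv₂)]

lemma CRel_of_Cδ_eq_some {A B : CState X} (h : Cδ δ X A x = some B) : CRel δ X A.1 x B.1 := by
  unfold Cδ at h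
  split_ifs at h with hex
  exact Option.some.inj h ▸ Classical.choose_spec hex

lemma Cδ_eq_some_of_CRel (hdisj : ∀ i j, i ≠ j → Disjoint (X i) (X j))
    (hmod : ∀ i, IsFsmModule δ s (X i)) {A B : CState X} (h : CRel δ X A.1 x B.1) :
    Cδ δ X A x = some B := by
  have hex : ∃ B' : CState X, CRel δ X A.1 x B'.1 := ⟨B, h⟩
  obtain ⟨p, rfl⟩ := A.exists_eq_toCState
  rw [Cδ, dif_pos hex]
  exact congrArg some (Subtype.ext (CRel.unique hdisj hmod (Classical.choose_spec hex) h))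

lemma Cδ_toCState_of_ne (hdisj : ∀ i j, i ≠ j → Disjoint (X i) (X j))
    (hmod : ∀ i, IsFsmModule δ s (X i)) {u v : Q} (harc : δ u x = some v)
    (hne : rho X u ≠ rho X v) : Cδ δ X (toCState X u) x = some (toCState X v) :=
  Cδ_eq_some_of_CRel hdisj hmod ⟨⟨u, v, rfl, rfl, harc⟩, .inl hne⟩

lemma Cδ_toCState_or_mem (hdisj : ∀ i j, i ≠ j → Disjoint (X i) (X j))
    (hmod : ∀ i, IsFsmModule δ s (X i)) {u v : Q} (harc : δ u x = some v) :
    Cδ δ X (toCState X u) x = some (toCState X v) ∨ ∃ i, u ∈ X i ∧ v ∈ X i := by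
  by_cases hne : rho X u = rho X v
  · have hvu : v ∈ rho X u := hne ▸ mem_rho_self v
    by_cases hu : ∃ i, u ∈ X i
    · obtain ⟨i, hui⟩ := hu
      exact .inr ⟨i, hui, rho_eq_of_mem hdisj hui ▸ hvu⟩
    · push Not at hu
      rw [rho_eq_singleton hu, Set.mem_singleton_iff] at hvu
      subst hvu
      exact .inl (Cδ_eq_some_of_CRel hdisj hmod
        ⟨⟨v, v, rfl, rfl, harc⟩, .inr ⟨v, rho_eq_singleton hu, hu, harc⟩⟩)
  · exact .inl (Cδ_toCState_of_ne hdisj hmod harc hne)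

lemma exists_arc_of_Cδ_eq_some {A B : CState X} (h : Cδ δ X A x = some B) :
    ∃ u ∈ A.1, ∃ v ∈ B.1, δ u x = some v := by
  obtain ⟨⟨u, v, hu, hv, harc⟩, -⟩ := CRel_of_Cδ_eq_some h
  exact ⟨u, hu ▸ mem_rho_self u, v, hv ▸ mem_rho_self v, harc⟩

lemma exists_isExit_of_Cδ_eq_some (hdisj : ∀ i j, i ≠ j → Disjoint (X i) (X j))
    {A B : CState X} {i : Fin n} (h : Cδ δ X A x = some B) (hA : A.1 = X i) :
    ∃ v, IsExit δ (X i) x v := by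
  have hrel := CRel_of_Cδ_eq_some h
  rw [hA] at hrel
  obtain ⟨v, hv, -⟩ := hrel.exists_isExit hdisj
  exact ⟨v, hv⟩

lemma isSome_of_Cδ_toCState_eq_some (hdisj : ∀ i j, i ≠ j → Disjoint (X i) (X j))
    (hmod : ∀ i, IsFsmModule δ s (X i)) {u : Q} {B : CState X}
    (h : Cδ δ X (toCState X u) x = some B) : (δ u x).isSome := by
  by_cases hu : ∃ i, u ∈ X i
  · obtain ⟨i, hui⟩ := hu
    obtain ⟨v, hv⟩ := exists_isExit_of_Cδ_eq_some hdisj h (rho_eq_of_mem hdisj hui)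
    exact (hmod i).isSome_of_isExit hv hui
  · push Not at hu
    have hrel := CRel_of_Cδ_eq_some h
    change CRel δ X (rho X u) x B.1 at hrel
    rw [rho_eq_singleton hu] at hrel
    obtain ⟨v, hv, -⟩ := hrel.singleton
    simp [hv]

lemma exists_transGen_Cδ_toCState [Finite Q] (hdisj : ∀ i j, i ≠ j → Disjoint (X i) (X j))
    (hmod : ∀ i, IsFsmModule δ s (X i)) {p : Q} (htot : ∀ u ∈ rho X p, (δ u x).isSome)
    (hnc : ¬ HasXCycleIn δ x (rho X p)) :
    ∃ v, Relation.TransGen (fun a b => a ∈ rho X p ∧ δ a x = some b) p v ∧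
      Cδ δ X (toCState X p) x = some (toCState X v) := by
  obtain ⟨v, ⟨hv, t, ht, htv⟩, hpv⟩ := exists_isExit_transGen htot hnc (mem_rho_self p)
  refine ⟨v, hpv, ?_⟩
  rw [CState.eq_toCState hdisj (A := toCState X p) ht]
  refine Cδ_toCState_of_ne hdisj hmod htv fun h => hv ?_
  rw [← rho_eq_rho_of_mem hdisj ht, h]
  exact mem_rho_self v

theorem accessible_contraction (hdisj : ∀ i j, i ≠ j → Disjoint (X i) (X j))
    (hmod : ∀ i, IsFsmModule δ s (X i)) (hacc : Accessible δ s) :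
    Accessible (Cδ δ X) (toCState X s) := by
  intro A
  obtain ⟨p, rfl⟩ := A.exists_eq_toCState
  induction hacc p with
  | refl => exact .refl
  | @tail c d _ hcd ih =>
    obtain ⟨x, harc⟩ := hcd
    rcases Cδ_toCState_or_mem hdisj hmod harc with h | ⟨i, hc, hd⟩
    · exact ih.tail ⟨x, h⟩
    · have hdc : toCState X d = toCState X c :=
        Subtype.ext ((rho_eq_of_mem hdisj hd).trans (rho_eq_of_mem hdisj hc).symm)
      exact hdc ▸ ih

end Contraction

section Preimage

variable {δ : Q → E → Option Q} {s : Q} {n : ℕ} {X : Fin n → Set Q} {x : E}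
  {N : Set (CState X)}

lemma IsEntrance.map_toCState (hdisj : ∀ i j, i ≠ j → Disjoint (X i) (X j))
    (hmod : ∀ i, IsFsmModule δ s (X i)) {u : Q} (hu : IsEntrance δ (toCState X ⁻¹' N) u) :
    IsEntrance (Cδ δ X) N (toCState X u) := by
  obtain ⟨huN, x, v, hvN, harc⟩ := hu
  refine ⟨huN, x, toCState X v, hvN, Cδ_toCState_of_ne hdisj hmod harc fun h => hvN ?_⟩
  rwa [Set.mem_preimage, show toCState X v = toCState X u from Subtype.ext h]

lemma IsExit.map_toCState (hdisj : ∀ i j, i ≠ j → Disjoint (X i) (X j))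
    (hmod : ∀ i, IsFsmModule δ s (X i)) {v : Q} (hv : IsExit δ (toCState X ⁻¹' N) x v) :
    IsExit (Cδ δ X) N x (toCState X v) := by
  obtain ⟨hvN, u, huN, harc⟩ := hv
  refine ⟨hvN, toCState X u, huN, Cδ_toCState_of_ne hdisj hmod harc fun h => hvN ?_⟩
  rwa [Set.mem_preimage, show toCState X v = toCState X u from Subtype.ext h.symm]

lemma IsExit.isEntrance_rho (hdisj : ∀ i j, i ≠ j → Disjoint (X i) (X j)) {v : Q}
    (hv : IsExit δ (toCState X ⁻¹' N) x v) : IsEntrance δ (rho X v) v := by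
  obtain ⟨hvN, u, huN, harc⟩ := hv
  refine ⟨mem_rho_self v, x, u, fun hu => hvN ?_, harc⟩
  rwa [Set.mem_preimage, CState.eq_toCState hdisj (A := toCState X v) hu]

lemma IsStartNode.map_toCState (hdisj : ∀ i j, i ≠ j → Disjoint (X i) (X j))
    (hmod : ∀ i, IsFsmModule δ s (X i)) {σ : Q} (h : IsStartNode δ s (toCState X ⁻¹' N) σ) :
    IsStartNode (Cδ δ X) (toCState X s) N (toCState X σ) := by
  rcases h with ⟨hs, rfl⟩ | ⟨hs, hσ⟩
  exacts [.inl ⟨hs, rfl⟩, .inr ⟨hs, hσ.map_toCState hdisj hmod⟩]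

/-- Membership in `ρ⁻¹(N)` depends only on the class, so two entrances (or two `x`-exits) of
`ρ⁻¹(N)` with the same class are entrances of that class, a module, and hence equal. -/
theorem IsFsmModule.preimage_toCState (hdisj : ∀ i j, i ≠ j → Disjoint (X i) (X j))
    (hmod : ∀ i, IsFsmModule δ s (X i)) (hN : IsFsmModule (Cδ δ X) (toCState X s) N) :
    IsFsmModule δ s (toCState X ⁻¹' N) := by
  have hρ := rho_isFsmModule hdisj hmod
  refine ⟨?_, fun u u' hu hu' => ?_, fun hs u hu => ?_, fun x ⟨v₀, hv₀⟩ => ⟨fun v v' hv hv' => ?_,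
    fun u hu => ?_⟩⟩
  · obtain ⟨A, hA⟩ := hN.1
    obtain ⟨p, rfl⟩ := A.exists_eq_toCState
    exact ⟨p, hA⟩
  · have hρu : rho X u' = rho X u :=
      congrArg Subtype.val (hN.2.1 _ _ (hu'.map_toCState hdisj hmod) (hu.map_toCState hdisj hmod))
    have hsub := rho_subset_preimage_toCState hdisj hu.1
    exact (hρ u).2.1 u u' (hu.of_subset hsub (mem_rho_self u))
      (hu'.of_subset hsub (hρu ▸ mem_rho_self u'))
  · have hρu : rho X s = rho X u :=
      congrArg Subtype.val (hN.2.2.1 hs _ (hu.map_toCState hdisj hmod)).symm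
    exact (hρ u).2.2.1 (hρu ▸ mem_rho_self s) u
      (hu.of_subset (rho_subset_preimage_toCState hdisj hu.1) (mem_rho_self u))
  · have hρv : rho X v' = rho X v := congrArg Subtype.val
      ((hN.2.2.2 x ⟨_, hv.map_toCState hdisj hmod⟩).1 _ _ (hv'.map_toCState hdisj hmod)
        (hv.map_toCState hdisj hmod))
    exact (hρ v).2.1 v v' (hv.isEntrance_rho hdisj) (hρv ▸ hv'.isEntrance_rho hdisj)
  · obtain ⟨B, hB⟩ := Option.isSome_iff_exists.mp
      ((hN.2.2.2 x ⟨_, hv₀.map_toCState hdisj hmod⟩).2 _ hu)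
    exact isSome_of_Cδ_toCState_eq_some hdisj hmod hB

lemma transGen_toCState_or_mem (hdisj : ∀ i j, i ≠ j → Disjoint (X i) (X j))
    (hmod : ∀ i, IsFsmModule δ s (X i)) {a b : Q}
    (h : Relation.TransGen (fun u v => u ∈ toCState X ⁻¹' N ∧ δ u x = some v) a b) :
    Relation.TransGen (fun A B => A ∈ N ∧ Cδ δ X A x = some B) (toCState X a) (toCState X b) ∨
      ∃ i, a ∈ X i ∧ b ∈ X i ∧ Relation.TransGen (fun u v => u ∈ X i ∧ δ u x = some v) a b := by
  induction h with
  | single hab =>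
    rcases Cδ_toCState_or_mem hdisj hmod hab.2 with h | ⟨i, ha, hb⟩
    exacts [.inl (.single ⟨hab.1, h⟩), .inr ⟨i, ha, hb, .single ⟨ha, hab.2⟩⟩]
  | @tail c d _ hcd ih =>
    rcases Cδ_toCState_or_mem hdisj hmod hcd.2 with h | ⟨i, hc, hd⟩
    · rcases ih with ih | ⟨j, haj, hcj, -⟩
      · exact .inl (ih.tail ⟨hcd.1, h⟩)
      · have hac : toCState X a = toCState X c :=
          Subtype.ext ((rho_eq_of_mem hdisj haj).trans (rho_eq_of_mem hdisj hcj).symm)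
        exact .inl (hac ▸ .single ⟨hcd.1, h⟩)
    · rcases ih with ih | ⟨j, haj, hcj, ih⟩
      · have hdc : toCState X d = toCState X c :=
          Subtype.ext ((rho_eq_of_mem hdisj hd).trans (rho_eq_of_mem hdisj hc).symm)
        exact .inl (hdc ▸ ih)
      · obtain rfl : j = i := by
          by_contra hji
          exact Set.disjoint_left.mp (hdisj j i hji) hcj hc
        exact .inr ⟨j, haj, hd, ih.tail ⟨hc, hcd.2⟩⟩

theorem IsThinModule.preimage_toCState (hdisj : ∀ i j, i ≠ j → Disjoint (X i) (X j))
    (hthin : ∀ i, IsThinModule δ s (X i)) (hN : IsThinModule (Cδ δ X) (toCState X s) N) :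
    IsThinModule δ s (toCState X ⁻¹' N) := by
  have hmod i := (hthin i).1
  refine ⟨hN.1.preimage_toCState hdisj hmod, fun x => or_iff_not_imp_left.mpr fun hex => ?_⟩
  push Not at hex
  obtain ⟨v₀, hv₀⟩ := hex
  rintro ⟨z, hz, hcyc⟩
  rcases transGen_toCState_or_mem hdisj hmod hcyc with h | ⟨i, hzi, -, h⟩
  · exact hN.not_hasXCycleIn (hv₀.map_toCState hdisj hmod) ⟨_, hz, h⟩
  · obtain ⟨B, hB⟩ := Option.isSome_iff_exists.mp
      ((hN.1.2.2.2 x ⟨_, hv₀.map_toCState hdisj hmod⟩).2 _ hz)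
    obtain ⟨v, hv⟩ := exists_isExit_of_Cδ_eq_some hdisj hB (rho_eq_of_mem hdisj hzi)
    exact (hthin i).not_hasXCycleIn hv ⟨z, hzi, h⟩

lemma IsEntrance.exists_preimage (hdisj : ∀ i j, i ≠ j → Disjoint (X i) (X j)) {B : CState X}
    (hB : IsEntrance (Cδ δ X) N B) : ∃ v, B = toCState X v ∧ IsEntrance δ (toCState X ⁻¹' N) v := by
  obtain ⟨hBN, x, A, hAN, hAB⟩ := hB
  obtain ⟨u, hu, v, hv, harc⟩ := exists_arc_of_Cδ_eq_some hAB
  obtain rfl := CState.eq_toCState hdisj hu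
  obtain rfl := CState.eq_toCState hdisj hv
  exact ⟨v, rfl, hBN, x, u, hAN, harc⟩

lemma IsExit.exists_preimage (hdisj : ∀ i j, i ≠ j → Disjoint (X i) (X j)) {B : CState X}
    (hB : IsExit (Cδ δ X) N x B) : ∃ v, B = toCState X v ∧ IsExit δ (toCState X ⁻¹' N) x v := by
  obtain ⟨hBN, A, hAN, hAB⟩ := hB
  obtain ⟨u, hu, v, hv, harc⟩ := exists_arc_of_Cδ_eq_some hAB
  obtain rfl := CState.eq_toCState hdisj hu
  obtain rfl := CState.eq_toCState hdisj hv
  exact ⟨v, rfl, hBN, u, hAN, harc⟩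

lemma exists_transGen_of_Cδ_eq_some [Finite Q] (hdisj : ∀ i j, i ≠ j → Disjoint (X i) (X j))
    (hmod : ∀ i, IsFsmModule δ s (X i)) (htot : ∀ u ∈ toCState X ⁻¹' N, (δ u x).isSome)
    (hnc : ¬ HasXCycleIn δ x (toCState X ⁻¹' N)) {A B : CState X} (hA : A ∈ N)
    (hAB : Cδ δ X A x = some B) {p : Q} (hp : p ∈ A.1) :
    ∃ v ∈ B.1, Relation.TransGen (fun a b => a ∈ toCState X ⁻¹' N ∧ δ a x = some b) p v := by
  obtain rfl := CState.eq_toCState hdisj hp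
  have hsub := rho_subset_preimage_toCState hdisj hA
  obtain ⟨v, hpv, hpvW⟩ := exists_transGen_Cδ_toCState hdisj hmod (fun u hu => htot u (hsub hu))
    fun ⟨z, hz, hcyc⟩ => hnc ⟨z, hsub hz,
      Relation.TransGen.mono (fun a b hab => ⟨hsub hab.1, hab.2⟩) _ _ hcyc⟩
  obtain rfl := Option.some.inj (hpvW.symm.trans hAB)
  exact ⟨v, mem_rho_self v, Relation.TransGen.mono (fun a b hab => ⟨hsub hab.1, hab.2⟩) _ _ hpv⟩

lemma exists_transGen_of_transGen_Cδ [Finite Q] (hdisj : ∀ i j, i ≠ j → Disjoint (X i) (X j))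
    (hmod : ∀ i, IsFsmModule δ s (X i)) (htot : ∀ u ∈ toCState X ⁻¹' N, (δ u x).isSome)
    (hnc : ¬ HasXCycleIn δ x (toCState X ⁻¹' N)) {A C : CState X}
    (h : Relation.TransGen (fun A B => A ∈ N ∧ Cδ δ X A x = some B) A C) {p : Q} (hp : p ∈ A.1) :
    ∃ v ∈ C.1, Relation.TransGen (fun a b => a ∈ toCState X ⁻¹' N ∧ δ a x = some b) p v := by
  induction h with
  | single hAB => exact exists_transGen_of_Cδ_eq_some hdisj hmod htot hnc hAB.1 hAB.2 hp
  | tail _ hBC ih =>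
    obtain ⟨v, hv, hpv⟩ := ih
    obtain ⟨w, hw, hvw⟩ := exists_transGen_of_Cδ_eq_some hdisj hmod htot hnc hBC.1 hBC.2 hv
    exact ⟨w, hw, hpv.trans hvw⟩

theorem IsThinModule.of_preimage_toCState [Finite Q]
    (hdisj : ∀ i j, i ≠ j → Disjoint (X i) (X j)) (hmod : ∀ i, IsFsmModule δ s (X i))
    (hP : IsThinModule δ s (toCState X ⁻¹' N)) : IsThinModule (Cδ δ X) (toCState X s) N := by
  have htot {x : E} {v : Q} (hv : IsExit δ (toCState X ⁻¹' N) x v) :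
      ∀ u ∈ toCState X ⁻¹' N, (δ u x).isSome := fun _ hu => hP.1.isSome_of_isExit hv hu
  refine ⟨⟨?_, fun B B' hB hB' => ?_, fun hs B hB => ?_, fun x ⟨B₀, hB₀⟩ => ⟨fun B B' hB hB' => ?_,
    fun A hA => ?_⟩⟩, fun x => or_iff_not_imp_left.mpr fun hex => ?_⟩
  · obtain ⟨p, hp⟩ := hP.1.1
    exact ⟨_, hp⟩
  · obtain ⟨v, rfl, hv⟩ := hB.exists_preimage hdisj
    obtain ⟨v', rfl, hv'⟩ := hB'.exists_preimage hdisj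
    rw [hP.1.2.1 v v' hv hv']
  · obtain ⟨v, rfl, hv⟩ := hB.exists_preimage hdisj
    rw [hP.1.2.2.1 hs v hv]
  · obtain ⟨v, rfl, hv⟩ := hB.exists_preimage hdisj
    obtain ⟨v', rfl, hv'⟩ := hB'.exists_preimage hdisj
    rw [hP.1.eq_of_isExit hv hv']
  · obtain ⟨v₀, -, hv₀⟩ := hB₀.exists_preimage hdisj
    obtain ⟨p, rfl⟩ := A.exists_eq_toCState
    have hsub := rho_subset_preimage_toCState hdisj hA
    obtain ⟨v, -, hv⟩ := exists_transGen_Cδ_toCState hdisj hmod (p := p)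
      (fun u hu => htot hv₀ u (hsub hu)) fun ⟨z, hz, hcyc⟩ => hP.not_hasXCycleIn hv₀
        ⟨z, hsub hz, Relation.TransGen.mono (fun a b hab => ⟨hsub hab.1, hab.2⟩) _ _ hcyc⟩
    simp [hv]
  · push Not at hex
    obtain ⟨B₁, hB₁⟩ := hex
    obtain ⟨v₁, -, hv₁⟩ := hB₁.exists_preimage hdisj
    have hnc := hP.not_hasXCycleIn hv₁
    rintro ⟨B, hB, hcyc⟩
    obtain ⟨p, rfl⟩ := B.exists_eq_toCState
    obtain ⟨z, hzp, hz⟩ := exists_transGen_self_of_forall_exists (S := rho X p)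
      ⟨p, mem_rho_self p⟩ fun a ha => exists_transGen_of_transGen_Cδ hdisj hmod
        (htot hv₁) hnc hcyc ha
    exact hnc ⟨z, rho_subset_preimage_toCState hdisj hB hzp, hz⟩

end Preimage

section Kset

variable {δ : Q → E → Option Q} {s : Q} {n : ℕ} {X : Fin n → Set Q}

theorem IsThinModule.preimage_image_toCState [Finite Q] (hacc : Accessible δ s)
    (hdisj : ∀ i j, i ≠ j → Disjoint (X i) (X j)) (hthin : ∀ i, IsThinModule δ s (X i))
    {M : Set Q} (hM : IsThinModule δ s M) :
    IsThinModule δ s (toCState X ⁻¹' (toCState X '' M)) := by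
  have h := hM.union_biUnion hacc (Y := rho X) M.toFinite.toFinset fun u hu =>
    ⟨rho_isThinModule hdisj hthin u, u, mem_rho_self u, M.toFinite.mem_toFinset.mp hu⟩
  convert h using 1
  ext v
  simp only [Set.mem_preimage, Set.mem_image, Set.mem_union, Set.mem_iUnion,
    Set.Finite.mem_toFinset, exists_prop]
  constructor
  · rintro ⟨u, hu, huv⟩
    refine .inr ⟨u, hu, ?_⟩
    rw [show rho X u = rho X v from congrArg Subtype.val huv]
    exact mem_rho_self v
  · rintro (hv | ⟨u, hu, hvu⟩)
    exacts [⟨v, hv, rfl⟩, ⟨u, hu, CState.eq_toCState hdisj hvu⟩]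

lemma not_isStartNode_of_subset {M M' : Set Q} {q : Q} (hq : q ≠ s) (hMM' : M ⊆ M')
    (hqM : q ∈ M) (h : ¬ IsStartNode δ s M q) : ¬ IsStartNode δ s M' q := by
  rintro (⟨-, hqs⟩ | ⟨hs, hent⟩)
  · exact hq hqs
  · exact h (.inr ⟨fun hsM => hs (hMM' hsM), hent.of_subset hMM' hqM⟩)

lemma IsStartNode.of_map_toCState (hdisj : ∀ i j, i ≠ j → Disjoint (X i) (X j))
    {N : Set (CState X)} {σ : Q} (hsσ : s ∉ rho X σ)
    (hσ : ∀ v, IsEntrance δ (rho X σ) v → v = σ)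
    (h : IsStartNode (Cδ δ X) (toCState X s) N (toCState X σ)) :
    IsStartNode δ s (toCState X ⁻¹' N) σ := by
  rcases h with ⟨-, hσs⟩ | ⟨hs, hent⟩
  · have hρ : rho X σ = rho X s := congrArg Subtype.val hσs
    exact absurd (hρ ▸ mem_rho_self s) hsσ
  · obtain ⟨v, hσv, hv⟩ := hent.exists_preimage hdisj
    have hρ : rho X σ = rho X v := congrArg Subtype.val hσv
    have hvσ : v ∈ rho X σ := hρ ▸ mem_rho_self v
    obtain rfl := hσ v (hv.of_subset (rho_subset_preimage_toCState hdisj hent.1) hvσ)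
    exact .inr ⟨hs, hv⟩

lemma notMem_rho_and_eq_of_isEntrance_rho (hdisj : ∀ i j, i ≠ j → Disjoint (X i) (X j))
    (hthin : ∀ i, IsThinModule δ s (X i)) {q : Q} (hq : q ≠ s)
    (hK : ∀ i, ¬ Kset δ s q ⊆ X i) :
    s ∉ rho X q ∧ ∀ v, IsEntrance δ (rho X q) v → v = q := by
  by_cases hqX : ∃ i, q ∈ X i
  · obtain ⟨i, hqi⟩ := hqX
    have hstart : IsStartNode δ s (X i) q := by
      by_contra h
      exact hK i (Set.sInter_subset_of_mem ⟨hthin i, hqi, h⟩)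
    rw [rho_eq_of_mem hdisj hqi]
    rcases hstart with ⟨-, hqs⟩ | ⟨hs, hent⟩
    · exact absurd hqs hq
    · exact ⟨hs, fun v hv => (hthin i).1.2.1 v q hv hent⟩
  · push Not at hqX
    rw [rho_eq_singleton hqX]
    exact ⟨fun h => hq h.symm, fun v hv => hv.1⟩

end Kset

/-- Let `Z` be an accessible FSM with start state `s`, let
`X₁, …, Xₙ` be pairwise disjoint thin modules of `Z`, let `W = Z/X₁,…,Xₙ` be the
contraction with quotient map `ρ`, and let `q ≠ s` be a node with `K_q` contained
in no `Xᵢ`. Then `W` is accessible, `ρ(q)` is not the start state `ρ(s)` of `W`,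
and `ρ(K_q) = K_{ρ(q)}`, where `K_{ρ(q)}` is computed in `W`. -/
theorem stmt17 [Fintype Q] (δ : Q → E → Option Q) (s : Q) (hacc : Accessible δ s)
    (n : ℕ) (X : Fin n → Set Q) (hthin : ∀ i, IsThinModule δ s (X i))
    (hdisj : ∀ i j, i ≠ j → Disjoint (X i) (X j))
    (q : Q) (hq : q ≠ s) (hK : ∀ i, ¬ Kset δ s q ⊆ X i) :
    Accessible (Cδ δ X) ⟨rho X s, s, rfl⟩ ∧
    rho X q ≠ rho X s ∧
    Subtype.val '' Kset (Cδ δ X) ⟨rho X s, s, rfl⟩ ⟨rho X q, q, rfl⟩ =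
      rho X '' Kset δ s q := by
  have hmod i := (hthin i).1
  obtain ⟨hsq, hqent⟩ := notMem_rho_and_eq_of_isEntrance_rho hdisj hthin hq hK
  refine ⟨accessible_contraction hdisj hmod hacc, fun h => hsq (h ▸ mem_rho_self s),
    Set.Subset.antisymm ?_ ?_⟩
  · rintro _ ⟨B, hB, rfl⟩
    obtain ⟨p, rfl⟩ := CState.exists_eq_toCState B
    have hmeet : ∀ M ∈ {M | IsThinModule δ s M ∧ q ∈ M ∧ ¬ IsStartNode δ s M q},
        (rho X p ∩ M).Nonempty := by
      rintro M ⟨hM, hqM, hqM'⟩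
      obtain ⟨u, hu, hup⟩ := Set.mem_sInter.mp hB (toCState X '' M)
        ⟨(hM.preimage_image_toCState hacc hdisj hthin).of_preimage_toCState hdisj hmod,
          ⟨q, hqM, rfl⟩, fun h => not_isStartNode_of_subset hq (Set.subset_preimage_image _ _)
            hqM hqM' (h.of_map_toCState hdisj hsq hqent)⟩
      have hρ : rho X u = rho X p := congrArg Subtype.val hup
      exact ⟨u, hρ ▸ mem_rho_self u, hu⟩
    obtain ⟨a, hap, haK⟩ := (rho_isFsmModule hdisj hmod p).inter_sInter_nonempty hacc
      (fun M hM => hM.1.1) (fun M hM => hM.2.1) hmeet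
    exact ⟨a, haK, rho_eq_rho_of_mem hdisj hap⟩
  · rintro _ ⟨u, hu, rfl⟩
    refine ⟨toCState X u, Set.mem_sInter.mpr fun N ⟨hN, hqN, hqN'⟩ => ?_, rfl⟩
    exact Set.mem_sInter.mp hu _
      ⟨hN.preimage_toCState hdisj hthin, hqN, fun h => hqN' (h.map_toCState hdisj hmod)⟩
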